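/- Assume D ∩ dom f is nonempty and dom f ⊂ D. Then problem (P) has a solution if and only if 0 ∈ conv{v_k* : k = 1,…,m} + cone{u_j* : j = 1,…,q} + (ker B)^⊥. -/

import Mathlib

open scoped Pointwise

/-! On `dom f ⊆ D` the problem is to minimize `g = maxₖ (vₖ + βₖ)` over the polyhedron `dom f`,
and the criterion is linear programming duality. By the Farkas–Bartl lemma, which holds in any
real vector space since only finitely many functionals occur, if no point of `dom f` has `g ≤ t`
then some `l` in the simplex and `μ ≥ 0` make `∑ lₖ vₖ + ∑ μⱼ uⱼ` vanish on `ker B` with dual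
value `> t`. For a minimizer, `t = min g - 1` yields such multipliers. Conversely, multipliers bound
`g` from below on `dom f` (weak duality), and applying the alternative to `t = inf g` shows that
the infimum is attained. -/

/-- The convex cone generated by a set (all finite nonnegative combinations, including `0`). -/
def coneGen {E : Type*} [AddCommGroup E] [Module ℝ E] (s : Set E) : Set E :=
  {y | ∃ (n : ℕ) (c : Fin n → ℝ) (w : Fin n → E),
    (∀ i, 0 ≤ c i) ∧ (∀ i, w i ∈ s) ∧ y = ∑ i, c i • w i}

theorem farkas_bartl {V ι : Type*} [AddCommGroup V] [Module ℝ V] (s : Finset ι)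
    (a : ι → Module.Dual ℝ V) (b : Module.Dual ℝ V) (h : ∀ x, (∀ i ∈ s, 0 ≤ a i x) → 0 ≤ b x) :
    ∃ y : ι → ℝ, 0 ≤ y ∧ b = ∑ i ∈ s, y i • a i := by
  classical
  induction s using Finset.induction_on generalizing a b with
  | empty =>
    refine ⟨0, le_rfl, LinearMap.ext fun x => ?_⟩
    have hx := h x (by simp)
    have hnx := h (-x) (by simp)
    simp only [map_neg, Finset.sum_empty, LinearMap.zero_apply] at hnx ⊢
    linarith
  | insert j s hj ih =>
    suffices ∃ c : ℝ, 0 ≤ c ∧ ∃ y : ι → ℝ, 0 ≤ y ∧ b = c • a j + ∑ i ∈ s, y i • a i by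
      obtain ⟨c, hc, y, hy, rfl⟩ := this
      refine ⟨Function.update y j c, le_update_iff.mpr ⟨hc, fun i _ => hy i⟩, ?_⟩
      rw [Finset.sum_insert hj, Function.update_self]
      congr 1
      exact Finset.sum_congr rfl fun i hi => by
        rw [Function.update_of_ne (ne_of_mem_of_not_mem hi hj)]
    by_cases hs : ∀ x, (∀ i ∈ s, 0 ≤ a i x) → 0 ≤ b x
    · obtain ⟨y, hy, rfl⟩ := ih a b hs
      exact ⟨0, le_rfl, y, hy, by rw [zero_smul, zero_add]⟩
    obtain ⟨w, hw, hbw, hjw⟩ : ∃ w, (∀ i ∈ s, 0 ≤ a i w) ∧ b w < 0 ∧ a j w = -1 := by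
      push Not at hs
      obtain ⟨w, hw, hbw⟩ := hs
      have hjw : a j w < 0 := by
        by_contra! hjw
        exact hbw.not_ge (h w (Finset.forall_mem_insert _ _ _ |>.mpr ⟨hjw, hw⟩))
      have hc : 0 < (-(a j w))⁻¹ := by simpa using hjw
      refine ⟨(-(a j w))⁻¹ • w, fun i hi => ?_, ?_, ?_⟩
      · simpa using mul_nonneg hc.le (hw i hi)
      · simpa using mul_neg_of_pos_of_neg hc hbw
      · simp [hjw.ne]
    -- `T` is the projection onto `ker (a j)` along `w`.
    let T : V →ₗ[ℝ] V := LinearMap.id + (a j).smulRight w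
    have hT : ∀ x, T x = x + a j x • w := fun x => rfl
    obtain ⟨y, hy, hyT⟩ := ih (fun i => a i ∘ₗ T) (b ∘ₗ T) fun x hx =>
      h (T x) (Finset.forall_mem_insert _ _ _ |>.mpr ⟨by simp [hT, hjw], hx⟩)
    refine ⟨∑ i ∈ s, y i * a i w - b w, ?_, y, hy, LinearMap.ext fun x => ?_⟩
    · linarith [Finset.sum_nonneg fun i hi => mul_nonneg (hy i) (hw i hi)]
    · have hx := LinearMap.congr_fun hyT x
      simp only [LinearMap.comp_apply, hT, map_add, map_smul, smul_eq_mul, LinearMap.sum_apply,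
        LinearMap.smul_apply, mul_add, Finset.sum_add_distrib, mul_left_comm _ (a j x),
        ← Finset.mul_sum] at hx
      simp only [LinearMap.add_apply, LinearMap.sum_apply, LinearMap.smul_apply, smul_eq_mul]
      linarith

theorem exists_nonneg_sum_smul_eq_zero_of_infeasible {V ι : Type*} [AddCommGroup V] [Module ℝ V]
    [Fintype ι] (a : ι → Module.Dual ℝ V) (b : ι → ℝ) (h : ¬∃ x, ∀ i, a i x ≤ b i) :
    ∃ y : ι → ℝ, 0 ≤ y ∧ ∑ i, y i • a i = 0 ∧ ∑ i, y i * b i < 0 := by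
  -- Homogenize: `(x, s) ↦ s` and `(x, s) ↦ b i s - a i x` are nonnegative only where `s ≤ 0`.
  let A : Option ι → Module.Dual ℝ (V × ℝ) := fun o =>
    o.elim (LinearMap.snd ℝ V ℝ) fun i => b i • LinearMap.snd ℝ V ℝ - a i ∘ₗ LinearMap.fst ℝ V ℝ
  obtain ⟨y, hy, hyA⟩ := farkas_bartl Finset.univ A (-LinearMap.snd ℝ V ℝ) <| by
    rintro ⟨x, s⟩ hA
    have hs : 0 ≤ s := hA none (Finset.mem_univ _)
    have hax : ∀ i, a i x ≤ b i * s := fun i => by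
      simpa [A] using hA (some i) (Finset.mem_univ _)
    suffices ¬ 0 < s by simpa using this
    intro hs
    exact h ⟨s⁻¹ • x, fun i => by
      rw [map_smul, smul_eq_mul, inv_mul_le_iff₀ hs, mul_comm]; exact hax i⟩
  have hA : ∀ x s, -s = y none * s + ∑ i, y (some i) * (b i * s - a i x) := fun x s => by
    simpa [A, Fintype.sum_option] using LinearMap.congr_fun hyA (x, s)
  refine ⟨fun i => y (some i), fun i => hy _, LinearMap.ext fun x => ?_, ?_⟩
  · have := hA x 0
    simp only [mul_zero, zero_sub, mul_neg, Finset.sum_neg_distrib, neg_zero] at this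
    simpa using this.symm
  · have := hA 0 1
    simp only [mul_one, map_zero, sub_zero] at this
    have : 0 ≤ y none := hy none
    linarith

section Combinations

variable {E ι κ : Type*} [AddCommGroup E] [Module ℝ E] [Fintype ι] [Fintype κ]

theorem mem_convexHull_range_iff {v : κ → E} {x : E} :
    x ∈ convexHull ℝ (Set.range v) ↔ ∃ l ∈ stdSimplex ℝ κ, ∑ k, l k • v k = x := by
  classical
  have hv : Set.range v = Fintype.linearCombination ℝ v '' Set.range fun k => Pi.single k 1 := by
    rw [← Set.range_comp]
    simp [Function.comp_def]
  rw [hv, ← LinearMap.image_convexHull, convexHull_rangle_single_eq_stdSimplex]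
  rfl

theorem mem_coneGen_range_iff {w : ι → E} {x : E} :
    x ∈ coneGen (Set.range w) ↔ ∃ μ : ι → ℝ, 0 ≤ μ ∧ ∑ j, μ j • w j = x := by
  classical
  constructor
  · rintro ⟨n, c, g, hc, hg, rfl⟩
    choose idx hidx using hg
    refine ⟨fun j => ∑ i with idx i = j, c i, fun j => Finset.sum_nonneg fun i _ => hc i, ?_⟩
    rw [← Finset.sum_fiberwise Finset.univ idx]
    refine Finset.sum_congr rfl fun j _ => ?_
    rw [Finset.sum_smul]
    refine Finset.sum_congr rfl fun i hi => ?_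
    rw [← hidx, (Finset.mem_filter.mp hi).2]
  · rintro ⟨μ, hμ, rfl⟩
    let e := Fintype.equivFin ι
    refine ⟨Fintype.card ι, μ ∘ e.symm, w ∘ e.symm, fun i => hμ _, fun i => ⟨_, rfl⟩, ?_⟩
    exact (e.symm.sum_comp fun j => μ j • w j).symm

theorem zero_mem_convexHull_add_coneGen_add_iff (v : κ → E) (w : ι → E) {S : Set E}
    (hS : ∀ x ∈ S, -x ∈ S) :
    0 ∈ convexHull ℝ (Set.range v) + coneGen (Set.range w) + S ↔
      ∃ l ∈ stdSimplex ℝ κ, ∃ μ : ι → ℝ, 0 ≤ μ ∧ ∑ k, l k • v k + ∑ j, μ j • w j ∈ S := by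
  simp only [Set.mem_add, mem_convexHull_range_iff, mem_coneGen_range_iff]
  constructor
  · rintro ⟨_, ⟨_, ⟨l, hl, rfl⟩, _, ⟨μ, hμ, rfl⟩, rfl⟩, s, hs, hsum⟩
    refine ⟨l, hl, μ, hμ, ?_⟩
    rw [eq_neg_of_add_eq_zero_left hsum]
    exact hS s hs
  · rintro ⟨l, hl, μ, hμ, hs⟩
    exact ⟨_, ⟨_, ⟨l, hl, rfl⟩, _, ⟨μ, hμ, rfl⟩, rfl⟩, _, hS _ hs, add_neg_cancel _⟩

end Combinations

theorem exists_finite_minimizer_iff_exists_isMinOn {X : Type*} {f : X → EReal} {g : X → ℝ}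
    {P D : Set X} (hPD : P ⊆ D) (hfP : ∀ x ∈ P, f x = g x) (hf : ∀ x ∉ P, f x = ⊤) :
    (∃ u ∈ D, f u ≠ ⊤ ∧ f u ≠ ⊥ ∧ ∀ x ∈ D, f u ≤ f x) ↔ ∃ u ∈ P, IsMinOn g P u := by
  constructor
  · rintro ⟨u, -, hu, -, hmin⟩
    have huP : u ∈ P := by_contra fun h => hu (hf u h)
    refine ⟨u, huP, isMinOn_iff.mpr fun x hx => ?_⟩
    simpa [hfP u huP, hfP x hx] using hmin x (hPD hx)
  · rintro ⟨u, huP, hmin⟩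
    refine ⟨u, hPD huP, by simp [hfP u huP], by simp [hfP u huP], fun x _ => ?_⟩
    by_cases hx : x ∈ P
    · simpa [hfP u huP, hfP x hx] using isMinOn_iff.mp hmin x hx
    · simp [hf x hx]

section PolyhedralMinimization

variable {X Z ι κ : Type*} [AddCommGroup X] [Module ℝ X] [AddCommGroup Z] [Module ℝ Z]
  (B : X →ₗ[ℝ] Z) (z : Z) (u : ι → Module.Dual ℝ X) (γ : ι → ℝ)
  (v : κ → Module.Dual ℝ X) (β : κ → ℝ)

def polyhedralSet : Set X := {x | B x = z ∧ ∀ j, u j x ≤ γ j}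

variable [Fintype ι] [Fintype κ]

def maxAffine [Nonempty κ] (x : X) : ℝ :=
  Finset.univ.sup' Finset.univ_nonempty fun k => v k x + β k

def DualFeasible (l : κ → ℝ) (μ : ι → ℝ) : Prop :=
  0 ≤ l ∧ 0 ≤ μ ∧ ∀ w, B w = 0 → ∑ k, l k * v k w + ∑ j, μ j * u j w = 0

def dualObjective (l : κ → ℝ) (μ : ι → ℝ) (x : X) : ℝ :=
  ∑ k, l k * (v k x + β k) + ∑ j, μ j * (u j x - γ j)

variable {B z u γ v β}

theorem maxAffine_le_iff [Nonempty κ] {x : X} {t : ℝ} :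
    maxAffine v β x ≤ t ↔ ∀ k, v k x + β k ≤ t := by
  simp [maxAffine]

theorem le_maxAffine [Nonempty κ] (x : X) (k : κ) : v k x + β k ≤ maxAffine v β x :=
  Finset.le_sup' (fun k => v k x + β k) (Finset.mem_univ k)

theorem DualFeasible.smul {l : κ → ℝ} {μ : ι → ℝ} (h : DualFeasible B u v l μ) {c : ℝ}
    (hc : 0 ≤ c) : DualFeasible B u v (c • l) (c • μ) := by
  obtain ⟨hl, hμ, hker⟩ := h
  refine ⟨smul_nonneg hc hl, smul_nonneg hc hμ, fun w hw => ?_⟩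
  simp only [Pi.smul_apply, smul_eq_mul, mul_assoc, ← Finset.mul_sum, ← mul_add, hker w hw,
    mul_zero]

theorem dualObjective_smul (c : ℝ) (l : κ → ℝ) (μ : ι → ℝ) (x : X) :
    dualObjective u γ v β (c • l) (c • μ) x = c * dualObjective u γ v β l μ x := by
  simp only [dualObjective, mul_add, Finset.mul_sum, Pi.smul_apply, smul_eq_mul, mul_assoc]

theorem DualFeasible.dualObjective_eq {l : κ → ℝ} {μ : ι → ℝ} (h : DualFeasible B u v l μ)
    {x x' : X} (hxx' : B x = B x') :
    dualObjective u γ v β l μ x = dualObjective u γ v β l μ x' := by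
  have := h.2.2 (x - x') (by rw [map_sub, hxx', sub_self])
  simp only [dualObjective, map_sub, mul_sub, mul_add, Finset.sum_sub_distrib,
    Finset.sum_add_distrib] at this ⊢
  linarith

theorem DualFeasible.dualObjective_le_sum_mul_maxAffine [Nonempty κ] {l : κ → ℝ} {μ : ι → ℝ}
    (h : DualFeasible B u v l μ) {x₀ x : X} (hx₀ : B x₀ = z) (hx : x ∈ polyhedralSet B z u γ) :
    dualObjective u γ v β l μ x₀ ≤ (∑ k, l k) * maxAffine v β x := by
  have hv : ∑ k, l k * (v k x + β k) ≤ (∑ k, l k) * maxAffine v β x := by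
    rw [Finset.sum_mul]
    exact Finset.sum_le_sum fun k _ => mul_le_mul_of_nonneg_left (le_maxAffine x k) (h.1 k)
  have hu : ∑ j, μ j * (u j x - γ j) ≤ 0 :=
    Finset.sum_nonpos fun j _ => mul_nonpos_of_nonneg_of_nonpos (h.2.1 j) (by linarith [hx.2 j])
  rw [h.dualObjective_eq (hx₀.trans hx.1.symm), dualObjective]
  linarith

theorem exists_dualFeasible_sum_mul_lt_dualObjective [Nonempty κ] {x₀ : X}
    (hx₀ : x₀ ∈ polyhedralSet B z u γ) {t : ℝ}
    (ht : ∀ x ∈ polyhedralSet B z u γ, t < maxAffine v β x) :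
    ∃ l μ, DualFeasible B u v l μ ∧ (∑ k, l k) * t < dualObjective u γ v β l μ x₀ := by
  let K := LinearMap.ker B
  -- `a w ≤ b` says `x₀ + w ∈ polyhedralSet B z u γ` and `maxAffine v β (x₀ + w) ≤ t`.
  let a : ι ⊕ κ → Module.Dual ℝ K :=
    Sum.elim (fun j => u j ∘ₗ K.subtype) (fun k => v k ∘ₗ K.subtype)
  let b : ι ⊕ κ → ℝ := Sum.elim (fun j => γ j - u j x₀) (fun k => t - β k - v k x₀)
  obtain ⟨y, hy, hya, hyb⟩ := exists_nonneg_sum_smul_eq_zero_of_infeasible a b <| by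
    rintro ⟨w, hw⟩
    have hmem : x₀ + w ∈ polyhedralSet B z u γ := by
      refine ⟨by rw [map_add, hx₀.1, LinearMap.mem_ker.mp w.2, add_zero], fun j => ?_⟩
      have := hw (.inl j)
      simp only [a, b, Sum.elim_inl, LinearMap.comp_apply, Submodule.subtype_apply] at this
      rw [map_add]; linarith
    refine (ht _ hmem).not_ge (maxAffine_le_iff.mpr fun k => ?_)
    have := hw (.inr k)
    simp only [a, b, Sum.elim_inr, LinearMap.comp_apply, Submodule.subtype_apply] at this
    rw [map_add]; linarith
  refine ⟨fun k => y (.inr k), fun j => y (.inl j), ⟨fun k => hy _, fun j => hy _, fun w hw => ?_⟩,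
    ?_⟩
  · have := LinearMap.congr_fun hya ⟨w, hw⟩
    simpa [a, Fintype.sum_sum_type, add_comm] using this
  · simp only [b, Fintype.sum_sum_type, Sum.elim_inl, Sum.elim_inr] at hyb
    simp only [dualObjective, Finset.sum_mul, mul_sub, mul_add, Finset.sum_sub_distrib,
      Finset.sum_add_distrib] at hyb ⊢
    linarith

theorem exists_stdSimplex_dualFeasible_lt_dualObjective [Nonempty κ] {x₀ : X}
    (hx₀ : x₀ ∈ polyhedralSet B z u γ) {t : ℝ}
    (ht : ∀ x ∈ polyhedralSet B z u γ, t < maxAffine v β x) :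
    ∃ l ∈ stdSimplex ℝ κ, ∃ μ, DualFeasible B u v l μ ∧ t < dualObjective u γ v β l μ x₀ := by
  obtain ⟨l, μ, h, hlt⟩ := exists_dualFeasible_sum_mul_lt_dualObjective hx₀ ht
  have hle : dualObjective u γ v β l μ x₀ ≤ (∑ k, l k) * maxAffine v β x₀ :=
    h.dualObjective_le_sum_mul_maxAffine hx₀.1 hx₀
  have hpos : 0 < ∑ k, l k := by
    refine lt_of_le_of_ne (Finset.sum_nonneg fun k _ => h.1 k) fun h0 => ?_
    rw [← h0, zero_mul] at hlt hle
    exact hlt.not_ge hle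
  refine ⟨(∑ k, l k)⁻¹ • l, ⟨fun k => ?_, ?_⟩, (∑ k, l k)⁻¹ • μ, h.smul (by positivity), ?_⟩
  · exact mul_nonneg (by positivity) (h.1 k)
  · simp [← Finset.mul_sum, hpos.ne']
  · rw [dualObjective_smul, lt_inv_mul_iff₀ hpos]
    exact hlt

theorem exists_isMinOn_maxAffine_iff [Nonempty κ] (hP : (polyhedralSet B z u γ).Nonempty) :
    (∃ x ∈ polyhedralSet B z u γ, IsMinOn (maxAffine v β) (polyhedralSet B z u γ) x) ↔
      ∃ l ∈ stdSimplex ℝ κ, ∃ μ, DualFeasible B u v l μ := by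
  set P := polyhedralSet B z u γ
  set g := maxAffine v β
  constructor
  · rintro ⟨x, hx, hmin⟩
    obtain ⟨l, hl, μ, h, -⟩ := exists_stdSimplex_dualFeasible_lt_dualObjective hx (t := g x - 1)
      fun y hy => by linarith [isMinOn_iff.mp hmin y hy]
    exact ⟨l, hl, μ, h⟩
  · rintro ⟨l, hl, μ, h⟩
    obtain ⟨x₀, hx₀⟩ := hP
    have hbdd : BddBelow (g '' P) := ⟨dualObjective u γ v β l μ x₀, by
      rintro _ ⟨x, hx, rfl⟩
      simpa [hl.2] using h.dualObjective_le_sum_mul_maxAffine hx₀.1 hx⟩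
    by_contra! hnot
    have hlt : ∀ x ∈ P, sInf (g '' P) < g x := fun x hx =>
      (csInf_le hbdd ⟨x, hx, rfl⟩).lt_of_ne fun heq => hnot x hx <| isMinOn_iff.mpr
        fun y hy => heq ▸ csInf_le hbdd ⟨y, hy, rfl⟩
    obtain ⟨l', hl', μ', h', hgt⟩ := exists_stdSimplex_dualFeasible_lt_dualObjective hx₀ hlt
    refine hgt.not_ge (le_csInf ⟨g x₀, x₀, hx₀, rfl⟩ ?_)
    rintro _ ⟨x, hx, rfl⟩
    simpa [hl'.2] using h'.dualObjective_le_sum_mul_maxAffine hx₀.1 hx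

end PolyhedralMinimization

theorem existence_criterion_domf_subset_general
    {X Z : Type*}
    [AddCommGroup X] [Module ℝ X] [TopologicalSpace X]
    [AddCommGroup Z] [Module ℝ Z] [TopologicalSpace Z]
    (B : X →L[ℝ] Z) (z : Z) (q : ℕ) (us : Fin q → X →L[ℝ] ℝ) (γs : Fin q → ℝ)
    (m : ℕ) (v : Fin (m + 1) → X →L[ℝ] ℝ) (β : Fin (m + 1) → ℝ)
    (D : Set X)
    (domf : Set X) (hdomf : domf = {x | B x = z ∧ ∀ j, us j x ≤ γs j})
    (hdomne : domf.Nonempty)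
    (f : X → EReal)
    (hf : ∀ x ∈ domf,
      f x = ((Finset.univ.sup' Finset.univ_nonempty fun k => v k x + β k : ℝ) : EReal))
    (hf' : ∀ x ∉ domf, f x = ⊤)
    (hsub : domf ⊆ D) :
    (∃ u ∈ D, f u ≠ ⊤ ∧ f u ≠ ⊥ ∧ ∀ x ∈ D, f u ≤ f x) ↔
      (0 : X →L[ℝ] ℝ) ∈
        convexHull ℝ (Set.range v) + coneGen (Set.range us) +
          {φ : X →L[ℝ] ℝ | ∀ u : X, B u = 0 → φ u = 0} := by
  have hP : domf = polyhedralSet (B : X →ₗ[ℝ] Z) z (fun j => (us j : Module.Dual ℝ X)) γs :=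
    hdomf
  rw [exists_finite_minimizer_iff_exists_isMinOn hsub
      (g := maxAffine (fun k => (v k : Module.Dual ℝ X)) β) hf hf', hP,
    exists_isMinOn_maxAffine_iff (hP ▸ hdomne),
    zero_mem_convexHull_add_coneGen_add_iff v us
      (S := {φ : X →L[ℝ] ℝ | ∀ u : X, B u = 0 → φ u = 0}) fun φ hφ w hw => by simp [hφ w hw]]
  refine exists_congr fun l => and_congr_right fun hl => exists_congr fun μ => ?_
  simp [DualFeasible, Pi.le_def, hl.1]

/-- With `D` nonempty generalized polyhedral convex given by `A, y, xs, α`, and `f` proper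
generalized polyhedral convex with `dom f` given by `B, z, us, γs` and
`f = max {⟨vₖ, ·⟩ + βₖ}` on `dom f`: if `D ∩ dom f ≠ ∅` and `dom f ⊆ D`, then `(P)` has a
solution iff `0 ∈ conv {vₖ} + cone {usⱼ} + (ker B)^⊥`. -/
theorem existence_criterion_domf_subset
    {X Y Z : Type*}
    [AddCommGroup X] [Module ℝ X] [TopologicalSpace X] [IsTopologicalAddGroup X]
    [ContinuousSMul ℝ X] [LocallyConvexSpace ℝ X] [T2Space X]
    [AddCommGroup Y] [Module ℝ Y] [TopologicalSpace Y] [IsTopologicalAddGroup Y]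
    [ContinuousSMul ℝ Y] [LocallyConvexSpace ℝ Y] [T2Space Y]
    [AddCommGroup Z] [Module ℝ Z] [TopologicalSpace Z] [IsTopologicalAddGroup Z]
    [ContinuousSMul ℝ Z] [LocallyConvexSpace ℝ Z] [T2Space Z]
    (A : X →L[ℝ] Y) (y : Y) (p : ℕ) (xs : Fin p → X →L[ℝ] ℝ) (α : Fin p → ℝ)
    (B : X →L[ℝ] Z) (z : Z) (q : ℕ) (us : Fin q → X →L[ℝ] ℝ) (γs : Fin q → ℝ)
    (m : ℕ) (v : Fin (m + 1) → X →L[ℝ] ℝ) (β : Fin (m + 1) → ℝ)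
    (D : Set X) (hD : D = {x | A x = y ∧ ∀ i, xs i x ≤ α i})
    (domf : Set X) (hdomf : domf = {x | B x = z ∧ ∀ j, us j x ≤ γs j})
    (hdomne : domf.Nonempty)
    (f : X → EReal)
    (hf : ∀ x ∈ domf,
      f x = ((Finset.univ.sup' Finset.univ_nonempty fun k => v k x + β k : ℝ) : EReal))
    (hf' : ∀ x ∉ domf, f x = ⊤)
    (hne : (D ∩ domf).Nonempty)
    (hsub : domf ⊆ D) :
    (∃ u ∈ D, f u ≠ ⊤ ∧ f u ≠ ⊥ ∧ ∀ x ∈ D, f u ≤ f x) ↔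
      (0 : X →L[ℝ] ℝ) ∈
        convexHull ℝ (Set.range v) + coneGen (Set.range us) +
          {φ : X →L[ℝ] ℝ | ∀ u : X, B u = 0 → φ u = 0} :=
  existence_criterion_domf_subset_general B z q us γs m v β D domf hdomf hdomne f hf hf' hsub
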